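/- arXiv:2303.17873 — 4 statements merged into one kernel-verified Lean document; each statement's English description precedes it below -/
import Mathlib

section
/- If f is a continuous Lebesgue measure-preserving interval map which is weakly mixing with respect to Lebesgue measure, then the set of periodic points of f has Lebesgue measure zero. -/
open MeasureTheory Filter

/-- Key lemma: if every point of a measurable set `A` is fixed by `f^[k]` (`k ≥ 1`),
and `f` is weakly mixing, then `A` cannot have measure strictly between 0 and 1. -/
lemma aux_wm_fixed (f : unitInterval → unitInterval)
    (hwm : ∀ A B : Set unitInterval, MeasurableSet A → MeasurableSet B →
      Tendsto (fun n : ℕ => (1 / (n : ℝ)) * ∑ j ∈ Finset.range n,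
        |(volume (f^[j] ⁻¹' A ∩ B)).toReal - (volume A).toReal * (volume B).toReal|)
        atTop (nhds 0))
    (k : ℕ) (hk : 1 ≤ k) (A : Set unitInterval) (mA : MeasurableSet A)
    (hfix : ∀ x ∈ A, f^[k] x = x) (h0 : 0 < volume A) (h1 : volume A < 1) : False := by
  set a : ℝ := (volume A).toReal with ha
  have hAne : volume A ≠ ⊤ := (lt_of_lt_of_le h1 le_top).ne
  have ha0 : 0 < a := ENNReal.toReal_pos h0.ne' hAne
  have ha1 : a < 1 := by
    have := (ENNReal.toReal_lt_toReal hAne (by norm_num)).2 h1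
    simpa using this
  set ε : ℝ := a - a * a with hε
  have hε0 : 0 < ε := by nlinarith
  -- every point of A is fixed by all iterates f^[k*i]
  have hfix' : ∀ (i : ℕ), ∀ x ∈ A, f^[k * i] x = x := by
    intro i
    induction i with
    | zero => intro x _; simp
    | succ i ih =>
      intro x hx
      have : k * (i + 1) = k * i + k := by ring
      rw [this, Function.iterate_add_apply, hfix x hx, ih x hx]
  -- key pointwise bound for terms at multiples of k
  have key : ∀ i : ℕ, ε ≤ |(volume (f^[k * i] ⁻¹' A ∩ A)).toReal - a * a| := by
    intro i
    have hsub : A ⊆ f^[k * i] ⁻¹' A ∩ A := by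
      intro x hx
      exact ⟨by simp [Set.mem_preimage, hfix' i x hx, hx], hx⟩
    have hmono : volume A ≤ volume (f^[k * i] ⁻¹' A ∩ A) := measure_mono hsub
    have hfin : volume (f^[k * i] ⁻¹' A ∩ A) ≠ ⊤ := measure_ne_top _ _
    have : a ≤ (volume (f^[k * i] ⁻¹' A ∩ A)).toReal :=
      ENNReal.toReal_le_toReal hAne hfin |>.2 hmono
    calc ε = a - a * a := rfl
      _ ≤ (volume (f^[k * i] ⁻¹' A ∩ A)).toReal - a * a := by linarith
      _ ≤ |(volume (f^[k * i] ⁻¹' A ∩ A)).toReal - a * a| := le_abs_self _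
  -- the averages along n = k*m are bounded below by ε/k
  have hbound : ∀ m : ℕ, 1 ≤ m →
      ε / k ≤ (1 / ((k * m : ℕ) : ℝ)) * ∑ j ∈ Finset.range (k * m),
        |(volume (f^[j] ⁻¹' A ∩ A)).toReal - a * a| := by
    intro m hm
    have hsum : (m : ℝ) * ε ≤ ∑ j ∈ Finset.range (k * m),
        |(volume (f^[j] ⁻¹' A ∩ A)).toReal - a * a| := by
      have himg : (Finset.range m).image (fun i => k * i) ⊆ Finset.range (k * m) := by
        intro j hj
        simp only [Finset.mem_image, Finset.mem_range] at hj ⊢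
        obtain ⟨i, hi, rfl⟩ := hj
        exact (Nat.mul_lt_mul_left (by omega : 0 < k)).2 hi
      have h1' : ∑ j ∈ (Finset.range m).image (fun i => k * i),
            |(volume (f^[j] ⁻¹' A ∩ A)).toReal - a * a|
          ≤ ∑ j ∈ Finset.range (k * m),
            |(volume (f^[j] ⁻¹' A ∩ A)).toReal - a * a| :=
        Finset.sum_le_sum_of_subset_of_nonneg himg (fun _ _ _ => abs_nonneg _)
      have h2' : ∑ j ∈ (Finset.range m).image (fun i => k * i),
            |(volume (f^[j] ⁻¹' A ∩ A)).toReal - a * a|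
          = ∑ i ∈ Finset.range m, |(volume (f^[k * i] ⁻¹' A ∩ A)).toReal - a * a| := by
        rw [Finset.sum_image]
        intro x _ y _ h
        exact Nat.eq_of_mul_eq_mul_left (by omega) h
      have h3' : (m : ℝ) * ε ≤ ∑ i ∈ Finset.range m,
          |(volume (f^[k * i] ⁻¹' A ∩ A)).toReal - a * a| := by
        calc (m : ℝ) * ε = ∑ _i ∈ Finset.range m, ε := by
              rw [Finset.sum_const, Finset.card_range, nsmul_eq_mul]
          _ ≤ _ := Finset.sum_le_sum (fun i _ => key i)
      linarith [h1', h2' ▸ h3']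
    have hk0 : (k : ℝ) ≠ 0 := by exact_mod_cast Nat.one_le_iff_ne_zero.1 hk
    have hm0 : (m : ℝ) ≠ 0 := by exact_mod_cast Nat.one_le_iff_ne_zero.1 hm
    have heq : ε / k = (1 / ((k * m : ℕ) : ℝ)) * ((m : ℝ) * ε) := by
      push_cast
      field_simp
    rw [heq]
    have hpos : 0 < (1 / ((k * m : ℕ) : ℝ)) := by
      have : (0:ℝ) < ((k * m : ℕ) : ℝ) := by
        have h1km : 1 ≤ k * m := Nat.one_le_iff_ne_zero.2 (Nat.mul_ne_zero (by omega) (by omega))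
        exact_mod_cast Nat.lt_of_lt_of_le Nat.zero_lt_one h1km
      positivity
    exact mul_le_mul_of_nonneg_left hsum hpos.le
  -- contradiction with weak mixing
  have h := (hwm A A mA mA).comp
    (tendsto_atTop_atTop.2 fun b => ⟨b, fun m hm => hm.trans (Nat.le_mul_of_pos_left m (by omega))⟩ :
      Tendsto (fun m : ℕ => k * m) atTop atTop)
  have hle : ε / k ≤ 0 := by
    refine ge_of_tendsto h ?_
    filter_upwards [eventually_ge_atTop 1] with m hm
    exact hbound m hm
  have hkpos : (0:ℝ) < k := by exact_mod_cast hk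
  have : 0 < ε / k := div_pos hε0 hkpos
  linarith

/-- If a continuous Lebesgue measure-preserving interval map is weakly mixing with
respect to Lebesgue measure, then its set of periodic points has Lebesgue measure zero. -/
theorem stmt_8 (f : unitInterval → unitInterval) (hc : Continuous f)
    (hmp : MeasurePreserving f (volume : Measure unitInterval) volume)
    (hwm : ∀ A B : Set unitInterval, MeasurableSet A → MeasurableSet B →
      Tendsto (fun n : ℕ => (1 / (n : ℝ)) * ∑ j ∈ Finset.range n,
        |(volume (f^[j] ⁻¹' A ∩ B)).toReal - (volume A).toReal * (volume B).toReal|)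
        atTop (nhds 0)) :
    volume {x : unitInterval | ∃ k ≥ 1, f^[k] x = x} = 0 := by
  -- the fixed point set of each iterate is null
  have hFix : ∀ k : ℕ, 1 ≤ k → volume {x : unitInterval | f^[k] x = x} = 0 := by
    intro k hk
    set F := {x : unitInterval | f^[k] x = x} with hF
    have mF : MeasurableSet F := (isClosed_eq ((hc.iterate k)) continuous_id).measurableSet
    by_contra hne
    have h0 : 0 < volume F := pos_iff_ne_zero.2 hne
    rcases lt_or_ge (volume F) 1 with h1 | h1
    · exact aux_wm_fixed f hwm k hk F mF (fun x hx => hx) h0 h1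
    · -- volume F = 1; intersect with the left half of the interval
      have hF1 : volume F = 1 := le_antisymm prob_le_one h1
      set S : Set unitInterval := (Subtype.val : unitInterval → ℝ) ⁻¹' Set.Iio (1/2) with hS
      have mS : MeasurableSet S := measurable_subtype_coe measurableSet_Iio
      have hSvol : volume S = ENNReal.ofReal (1/2) := by
        have hemb : MeasurableEmbedding (Subtype.val : unitInterval → ℝ) :=
          MeasurableEmbedding.subtype_coe measurableSet_Icc
        have : volume S = volume (Set.Iio (1/2 : ℝ) ∩ Set.range (Subtype.val : unitInterval → ℝ)) := by
          rw [hS, unitInterval.volume_def]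
          exact hemb.comap_preimage volume _
        rw [this, Subtype.range_coe]
        have : Set.Iio (1/2 : ℝ) ∩ unitInterval = Set.Ico (0:ℝ) (1/2) := by
          ext x
          simp only [Set.mem_inter_iff, Set.mem_Iio, Set.mem_Ico]
          constructor
          · rintro ⟨h1, h2, h3⟩; exact ⟨h2, h1⟩
          · rintro ⟨h1, h2⟩; exact ⟨h2, h1, by linarith⟩
        rw [this, Real.volume_Ico]
        norm_num
      have hFc : volume Fᶜ = 0 := by
        have := prob_compl_eq_one_sub mF (μ := (volume : Measure unitInterval))
        rw [this, hF1]; simp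
      have hsub : S ⊆ (F ∩ S) ∪ Fᶜ := by
        intro x hx
        by_cases hxF : x ∈ F
        · exact Or.inl ⟨hxF, hx⟩
        · exact Or.inr hxF
      have hge : volume S ≤ volume (F ∩ S) := by
        calc volume S ≤ volume ((F ∩ S) ∪ Fᶜ) := measure_mono hsub
          _ ≤ volume (F ∩ S) + volume Fᶜ := measure_union_le _ _
          _ = volume (F ∩ S) := by rw [hFc, add_zero]
      have hAS0 : 0 < volume (F ∩ S) :=
        lt_of_lt_of_le (by rw [hSvol]; norm_num) hge
      have hAS1 : volume (F ∩ S) < 1 := by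
        calc volume (F ∩ S) ≤ volume S := measure_mono Set.inter_subset_right
          _ = ENNReal.ofReal (1/2) := hSvol
          _ < 1 := by
            rw [show (1 : ENNReal) = ENNReal.ofReal 1 by simp]
            exact ENNReal.ofReal_lt_ofReal_iff (by norm_num) |>.2 (by norm_num)
      exact aux_wm_fixed f hwm k hk (F ∩ S) (mF.inter mS)
        (fun x hx => hx.1) hAS0 hAS1
  have hsub : {x : unitInterval | ∃ k ≥ 1, f^[k] x = x} ⊆
      ⋃ k : ℕ, {x : unitInterval | f^[k+1] x = x} := by
    rintro x ⟨k, hk, hx⟩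
    exact Set.mem_iUnion.2 ⟨k - 1, by rwa [Nat.sub_add_cancel hk]⟩
  refine measure_mono_null hsub (measure_iUnion_null fun k => hFix (k+1) (by omega))
end

section
/- Let f : [0,1] → [0,1] be continuous on a subinterval A, and suppose the upper right Dini derivative D⁺f(x) ≥ 0 for Lebesgue-almost every x ∈ A and D⁺f(x) > −∞ for every x ∈ A. Then f is non-decreasing on A. -/
open MeasureTheory Filter Set

lemma mono_aux {G : ℝ → ℝ} {x y : ℝ} (hxy : x ≤ y) (hc : ContinuousOn G (Icc x y))
    (H : ∀ t ∈ Ico x y, ∃ᶠ z in nhdsWithin t (Ioi t), G t < G z) : G x ≤ G y := by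
  set S : Set ℝ := Icc x y ∩ G ⁻¹' (Ici (G x)) with hS
  have hSc : IsClosed S := hc.preimage_isClosed_of_isClosed isClosed_Icc isClosed_Ici
  have hxS : x ∈ S := ⟨⟨le_refl x, hxy⟩, mem_preimage.mpr (le_refl (G x))⟩
  have hbdd : BddAbove S := ⟨y, fun t ht => ht.1.2⟩
  set c := sSup S with hcdef
  have hcS : c ∈ S := hSc.csSup_mem ⟨x, hxS⟩ hbdd
  have hcy : c ≤ y := hcS.1.2
  rcases eq_or_lt_of_le hcy with h | h
  · have := hcS.2; rw [h] at this; exact this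
  · exfalso
    have hfreq := H c ⟨hcS.1.1, h⟩
    have hev : Ioc c y ∈ nhdsWithin c (Ioi c) := Ioc_mem_nhdsGT_of_mem ⟨le_refl c, h⟩
    rcases (hfreq.and_eventually (eventually_of_mem hev fun z hz => hz)).exists with
      ⟨z, hz1, hz2⟩
    have hzS : z ∈ S := ⟨⟨hcS.1.1.trans hz2.1.le, hz2.2⟩, le_of_lt (lt_of_le_of_lt hcS.2 hz1)⟩
    exact absurd (le_csSup hbdd hzS) (not_le.mpr hz2.1)

/-- The upper right Dini derivative, valued in `EReal`. -/
noncomputable def upperRightDini (f : ℝ → ℝ) (x : ℝ) : EReal :=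
  limsup (fun t => (((f t - f x) / (t - x) : ℝ) : EReal)) (nhdsWithin x (Ioi x))

/-- If `f` is continuous on a subinterval `A` of `[0,1]`, its upper right Dini derivative
is nonnegative Lebesgue-almost everywhere on `A` and is `> -∞` everywhere on `A`, then
`f` is non-decreasing on `A`. -/
theorem stmt_13 (f : ℝ → ℝ) (a b : ℝ) (hab : a ≤ b)
    (hsub : Icc a b ⊆ Icc (0 : ℝ) 1) (hmaps : MapsTo f (Icc (0 : ℝ) 1) (Icc (0 : ℝ) 1))
    (hcont : ContinuousOn f (Icc a b))
    (hae : ∀ᵐ x ∂(volume.restrict (Icc a b)), 0 ≤ upperRightDini f x)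
    (hbot : ∀ x ∈ Icc a b, ⊥ < upperRightDini f x) :
    MonotoneOn f (Icc a b) := by
  intro x hx y hy hxy
  rcases eq_or_lt_of_le hxy with rfl | hxy'
  · exact le_refl _
  have hsub' : Icc x y ⊆ Icc a b := Icc_subset_Icc hx.1 hy.2
  refine le_of_forall_pos_le_add fun ε' hε' => ?_
  have hyx2 : (0:ℝ) < y - x + 2 := by linarith
  set ε : ℝ := ε' / (y - x + 2) with hεdef
  have hε : 0 < ε := div_pos hε' hyx2
  -- the null set
  have hae' : ∀ᵐ t, t ∈ Icc a b → 0 ≤ upperRightDini f t :=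
    (ae_restrict_iff' measurableSet_Icc).mp hae
  set N : Set ℝ := {t : ℝ | ¬ (t ∈ Icc a b → 0 ≤ upperRightDini f t)} with hNdef
  have hN : volume N = 0 := hae'
  -- open covers
  have hU : ∀ k : ℕ, ∃ U, N ⊆ U ∧ IsOpen U ∧ volume U < ENNReal.ofReal (ε * (1/2)^k) := by
    intro k
    have hpos : (0:ENNReal) < ENNReal.ofReal (ε * (1/2)^k) :=
      ENNReal.ofReal_pos.mpr (by positivity)
    obtain ⟨V, hV1, hV2, hV3⟩ := Set.exists_isOpen_lt_of_lt N _ (hN ▸ hpos)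
    exact ⟨V, hV1, hV2, hV3⟩
  choose U hUN hUopen hUvol using hU
  -- the auxiliary functions
  set H : ℕ → ℝ → ℝ := fun k t => (volume (U k ∩ Ioc x t)).toReal with hHdef
  have hfin : ∀ k t, volume (U k ∩ Ioc x t) < ⊤ :=
    fun k t => lt_of_le_of_lt (measure_mono inter_subset_left) ((hUvol k).trans_le le_top)
  have hHb : ∀ k t, H k t ≤ ε * (1/2)^k := by
    intro k t
    exact ENNReal.toReal_le_of_le_ofReal (by positivity)
      (le_of_lt (lt_of_le_of_lt (measure_mono inter_subset_left) (hUvol k)))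
  have hHnn : ∀ k t, 0 ≤ H k t := fun k t => ENNReal.toReal_nonneg
  have hHmono : ∀ k, ∀ {t t' : ℝ}, t ≤ t' → H k t ≤ H k t' := by
    intro k t t' htt
    exact ENNReal.toReal_mono (hfin k t').ne
      (measure_mono (inter_subset_inter_right _ (Ioc_subset_Ioc_right htt)))
  have hHadd : ∀ k, ∀ {t z : ℝ}, x ≤ t → t < z →
      H k z - H k t = (volume (U k ∩ Ioc t z)).toReal := by
    intro k t z hxt htz
    have hsplit : U k ∩ Ioc x z = (U k ∩ Ioc x t) ∪ (U k ∩ Ioc t z) := by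
      rw [← inter_union_distrib_left, Ioc_union_Ioc_eq_Ioc hxt htz.le]
    have hdisj : Disjoint (U k ∩ Ioc x t) (U k ∩ Ioc t z) :=
      (Set.Ioc_disjoint_Ioc_of_le le_rfl).mono inter_subset_right inter_subset_right
    have hm : volume (U k ∩ Ioc x z) = volume (U k ∩ Ioc x t) + volume (U k ∩ Ioc t z) := by
      rw [hsplit, measure_union hdisj ((hUopen k).measurableSet.inter measurableSet_Ioc)]
    have hadd := ENNReal.toReal_add (a := volume (U k ∩ Ioc x t))
      (b := volume (U k ∩ Ioc t z)) (hfin k t).ne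
      (lt_of_le_of_lt (measure_mono inter_subset_left) ((hUvol k).trans_le le_top)).ne
    simp only [hHdef, hm, hadd]
    ring
  have hsummg : Summable (fun k : ℕ => ε * (1/2:ℝ)^k) :=
    (summable_geometric_of_lt_one (by norm_num) (by norm_num)).mul_left ε
  have hsumm : ∀ t, Summable (fun k => H k t) := fun t =>
    Summable.of_nonneg_of_le (fun k => hHnn k t) (fun k => hHb k t) hsummg
  set h : ℝ → ℝ := fun t => ∑' k, H k t with hhdef
  have hhcont : Continuous h := by
    refine continuous_tsum (fun k => ?_) hsummg (fun k t => ?_)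
    · -- each H k is 1-Lipschitz hence continuous
      refine LipschitzWith.continuous (K := 1) (LipschitzWith.of_dist_le_mul fun t t' => ?_)
      wlog hle : t' ≤ t generalizing t t'
      · rw [dist_comm, dist_comm t t']; exact this t' t (le_of_not_ge hle)
      have key : H k t ≤ H k t' + (t - t') := by
        have hsub2 : U k ∩ Ioc x t ⊆ (U k ∩ Ioc x t') ∪ Ioc t' t := by
          intro w hw
          rcases le_or_gt w t' with hw' | hw'
          · exact Or.inl ⟨hw.1, hw.2.1, hw'⟩
          · exact Or.inr ⟨hw', hw.2.2⟩
        have hv : volume (U k ∩ Ioc x t) ≤ volume (U k ∩ Ioc x t') + ENNReal.ofReal (t - t') := by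
          calc volume (U k ∩ Ioc x t) ≤ volume ((U k ∩ Ioc x t') ∪ Ioc t' t) :=
                measure_mono hsub2
            _ ≤ volume (U k ∩ Ioc x t') + volume (Ioc t' t) := measure_union_le _ _
            _ = volume (U k ∩ Ioc x t') + ENNReal.ofReal (t - t') := by rw [Real.volume_Ioc]
        have := ENNReal.toReal_mono (by
            exact (ENNReal.add_lt_top.mpr ⟨hfin k t', ENNReal.ofReal_lt_top⟩).ne) hv
        rw [ENNReal.toReal_add (hfin k t').ne ENNReal.ofReal_ne_top,
          ENNReal.toReal_ofReal (by linarith)] at this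
        exact this
      have h1 : H k t' ≤ H k t := hHmono k hle
      rw [Real.dist_eq, Real.dist_eq, abs_of_nonneg (by linarith), abs_of_nonneg (by linarith)]
      push_cast
      linarith
    · rw [Real.norm_eq_abs, abs_of_nonneg (hHnn k t)]; exact hHb k t
  have hhmono : ∀ {t t' : ℝ}, t ≤ t' → h t ≤ h t' := fun {t t'} htt =>
    Summable.tsum_le_tsum (fun k => hHmono k htt) (hsumm t) (hsumm t')
  have hhx : h x = 0 := by
    simp only [hhdef, hHdef, Ioc_self, inter_empty, measure_empty, ENNReal.toReal_zero,
      tsum_zero]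
  have hhy : h y ≤ 2 * ε := by
    calc h y ≤ ∑' k, ε * (1/2:ℝ)^k := Summable.tsum_le_tsum (fun k => hHb k y) (hsumm y) hsummg
      _ = ε * 2 := by
          rw [tsum_mul_left, tsum_geometric_of_lt_one (by norm_num) (by norm_num)]
          norm_num
      _ = 2 * ε := by ring
  -- the perturbed function
  set G : ℝ → ℝ := fun t => f t + ε * t + h t with hGdef
  have hGcont : ContinuousOn G (Icc x y) := by
    apply ContinuousOn.add
    apply ContinuousOn.add (hcont.mono hsub')
    · exact (continuous_const.mul continuous_id).continuousOn
    · exact hhcont.continuousOn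
  have key : G x ≤ G y := by
    refine mono_aux hxy (by exact hGcont) ?_
    intro t ht
    have htab : t ∈ Icc a b := hsub' ⟨ht.1, ht.2.le⟩
    by_cases htN : t ∈ N
    · -- bad point: use D⁺f > ⊥ and infinite derivative of h
      obtain ⟨M, _, hM2⟩ := EReal.exists_between_coe_real (hbot t htab)
      set K : ℕ := ⌈-M⌉₊ + 1 with hKdef
      have hMK : -M < (K : ℝ) := by
        calc -M ≤ (⌈-M⌉₊ : ℝ) := Nat.le_ceil _
          _ < (K : ℝ) := by rw [hKdef]; push_cast; linarith
      have hopen : IsOpen (⋂ k ∈ Finset.range K, U k) :=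
        isOpen_biInter_finset (fun k _ => hUopen k)
      have htmem : t ∈ ⋂ k ∈ Finset.range K, U k := mem_iInter₂.mpr fun k _ => hUN k htN
      obtain ⟨δ, hδ0, hδ⟩ := Metric.isOpen_iff.mp hopen t htmem
      have hfr : ∃ᶠ z in nhdsWithin t (Ioi t),
          (M : EReal) < (((f z - f t) / (z - t) : ℝ) : EReal) :=
        frequently_lt_of_lt_limsup (by isBoundedDefault) hM2
      have hev : Ioo t (t + δ) ∈ nhdsWithin t (Ioi t) :=
        Ioo_mem_nhdsGT_of_mem ⟨le_refl t, by linarith⟩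
      refine (hfr.and_eventually (eventually_of_mem hev fun z hz => hz)).mono ?_
      rintro z ⟨hz1, hz2⟩
      have hzt : t < z := hz2.1
      have hd : 0 < z - t := by linarith
      have hslope : M < (f z - f t) / (z - t) := by exact_mod_cast hz1
      have hf' : M * (z - t) < f z - f t := by
        have := (lt_div_iff₀ hd).mp hslope; linarith
      -- slope of h
      have hIoc : Ioc t z ⊆ ⋂ k ∈ Finset.range K, U k := by
        intro w hw
        apply hδ
        rw [Metric.mem_ball, Real.dist_eq, abs_of_nonneg (by linarith [hw.1.le])]
        linarith [hw.2, hz2.2]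
      have hHk : ∀ k ∈ Finset.range K, H k z - H k t = z - t := by
        intro k hk
        rw [hHadd k ht.1 hzt]
        have : U k ∩ Ioc t z = Ioc t z := by
          apply inter_eq_self_of_subset_right
          intro w hw
          exact mem_iInter₂.mp (hIoc hw) k hk
        rw [this, Real.volume_Ioc, ENNReal.toReal_ofReal (by linarith)]
      have hhsub : Summable (fun k => H k z - H k t) := (hsumm z).sub (hsumm t)
      have hhz : (K : ℝ) * (z - t) ≤ h z - h t := by
        have h1 : ∑ k ∈ Finset.range K, (H k z - H k t) ≤ ∑' k, (H k z - H k t) := by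
          refine Summable.sum_le_tsum _ (fun k _ => ?_) hhsub
          have := hHmono k hzt.le (t := t) (t' := z); linarith
        rw [Finset.sum_congr rfl hHk, Finset.sum_const, Finset.card_range,
          nsmul_eq_mul] at h1
        rw [Summable.tsum_sub (hsumm z) (hsumm t)] at h1
        exact h1
      have hpos : 0 < (M + ε + (K : ℝ)) * (z - t) := by
        apply mul_pos _ hd
        linarith
      simp only [hGdef]
      nlinarith
    · -- good point: D⁺f ≥ 0
      have hDpos : 0 ≤ upperRightDini f t := by
        simp only [hNdef, mem_setOf_eq, not_not] at htN
        exact htN htab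
      have hM2 : ((-(ε/2) : ℝ) : EReal) < upperRightDini f t := by
        refine lt_of_lt_of_le ?_ hDpos
        exact_mod_cast (by linarith : -(ε/2) < (0:ℝ))
      have hfr : ∃ᶠ z in nhdsWithin t (Ioi t),
          ((-(ε/2) : ℝ) : EReal) < (((f z - f t) / (z - t) : ℝ) : EReal) :=
        frequently_lt_of_lt_limsup (by isBoundedDefault) hM2
      have hev : Ioi t ∈ nhdsWithin t (Ioi t) := self_mem_nhdsWithin
      refine (hfr.and_eventually (eventually_of_mem hev fun z hz => hz)).mono ?_
      rintro z ⟨hz1, hz2⟩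
      have hzt : t < z := hz2
      have hd : 0 < z - t := by linarith
      have hslope : -(ε/2) < (f z - f t) / (z - t) := by exact_mod_cast hz1
      have hf' : -(ε/2) * (z - t) < f z - f t := by
        have := (lt_div_iff₀ hd).mp hslope; linarith
      have hhz : h t ≤ h z := hhmono hzt.le
      simp only [hGdef]
      nlinarith
  -- conclude
  have : f x + ε * x + h x ≤ f y + ε * y + h y := key
  rw [hhx] at this
  have hfin2 : f x ≤ f y + ε * (y - x + 2) := by nlinarith [hhy]
  rw [hεdef, div_mul_cancel₀ _ (ne_of_gt hyx2)] at hfin2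
  exact hfin2
end

section
/- If f : [0,1] → [0,1] is continuous and has a knot point at Lebesgue-almost every point, then f is not a Besicovitch function; in fact on every subinterval there exists a point x₀ with D⁺f(x₀) = −∞. -/
open MeasureTheory Filter Set

/-- Upper right Dini derivative `D⁺f(x)`, valued in `EReal`. -/
noncomputable def DURp (f : ℝ → ℝ) (x : ℝ) : EReal :=
  limsup (fun t => (((f t - f x) / (t - x) : ℝ) : EReal)) (nhdsWithin x (Ioi x))

/-- Lower right Dini derivative `D₊f(x)`. -/
noncomputable def DLRp (f : ℝ → ℝ) (x : ℝ) : EReal :=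
  liminf (fun t => (((f t - f x) / (t - x) : ℝ) : EReal)) (nhdsWithin x (Ioi x))

/-- Upper left Dini derivative `D⁻f(x)`. -/
noncomputable def DURm (f : ℝ → ℝ) (x : ℝ) : EReal :=
  limsup (fun t => (((f t - f x) / (t - x) : ℝ) : EReal)) (nhdsWithin x (Iio x))

/-- Lower left Dini derivative `D₋f(x)`. -/
noncomputable def DLRm (f : ℝ → ℝ) (x : ℝ) : EReal :=
  liminf (fun t => (((f t - f x) / (t - x) : ℝ) : EReal)) (nhdsWithin x (Iio x))

/-- `x` is a knot point of `f`: `D⁺f(x) = D⁻f(x) = +∞` and `D₊f(x) = D₋f(x) = -∞`. -/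
def IsKnotPoint (f : ℝ → ℝ) (x : ℝ) : Prop :=
  DURp f x = ⊤ ∧ DURm f x = ⊤ ∧ DLRp f x = ⊥ ∧ DLRm f x = ⊥

/-- `f` is a Besicovitch function on `[0,1]`: at no point does a unilateral (finite or
infinite) derivative exist. -/
def IsBesicovitch (f : ℝ → ℝ) : Prop :=
  ∀ x ∈ Icc (0 : ℝ) 1, DURp f x ≠ DLRp f x ∧ DURm f x ≠ DLRm f x

open scoped ENNReal


lemma chain_lemma {f H : ℝ → ℝ} {a b ε δ : ℝ}
    (hf : ContinuousOn f (Icc a b)) (hH : Monotone H)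
    (hε : 0 ≤ ε) (hδ : 0 < δ) (hab : a ≤ b)
    (hstep : ∀ x ∈ Ico a b, ∃ t ∈ Ioc x b,
      f x + ε * H x - δ * (t - x) ≤ f t + ε * H t) :
    f a + ε * H a - δ * (b - a) ≤ f b + ε * H b := by
  set S : Set ℝ := {x ∈ Icc a b | f a + ε * H a - δ * (x - a) ≤ f x + ε * H x} with hS
  have haS : a ∈ S := by simp [hS, hab]
  have hSne : S.Nonempty := ⟨a, haS⟩
  have hSbdd : BddAbove S := ⟨b, fun x hx => hx.1.2⟩
  set c := sSup S with hc
  have hac : a ≤ c := le_csSup hSbdd haS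
  have hcb : c ≤ b := csSup_le hSne fun x hx => hx.1.2
  have hcIcc : c ∈ Icc a b := ⟨hac, hcb⟩
  -- c satisfies the inequality
  have hcS : f a + ε * H a - δ * (c - a) ≤ f c + ε * H c := by
    by_contra hcon
    push_neg at hcon
    set θ := (f a + ε * H a - δ * (c - a) - (f c + ε * H c)) / 2 with hθdef
    have hθ : 0 < θ := by simp only [hθdef]; linarith
    have hfc := hf.continuousWithinAt hcIcc
    rw [Metric.continuousWithinAt_iff] at hfc
    obtain ⟨η, hη, hfc⟩ := hfc θ hθ
    have hmin : 0 < min η (1:ℝ) := lt_min hη one_pos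
    obtain ⟨x, hxS, hxgt⟩ := exists_lt_of_lt_csSup hSne (by linarith : c - min η (1:ℝ) < c)
    have hxc : x ≤ c := le_csSup hSbdd hxS
    have hxd : dist x c < η := by
      rw [Real.dist_eq, abs_lt]
      have h1 : min η (1:ℝ) ≤ η := min_le_left _ _
      constructor <;> linarith
    have hfx : dist (f x) (f c) < θ := hfc hxS.1 hxd
    rw [Real.dist_eq, abs_lt] at hfx
    have hHx : H x ≤ H c := hH hxc
    have := hxS.2
    have hεH : ε * H x ≤ ε * H c := by nlinarith
    nlinarith
  -- c = b
  rcases eq_or_lt_of_le hcb with h | h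
  · rw [← h]; exact hcS
  · obtain ⟨t, htb, hts⟩ := hstep c ⟨hac, h⟩
    have : t ∈ S := ⟨⟨le_trans hac (le_of_lt htb.1), htb.2⟩, by nlinarith [htb.1]⟩
    have : t ≤ c := le_csSup hSbdd this
    linarith [htb.1]


lemma exists_growth (Z : Set ℝ) (hZ : volume Z = 0) :
    ∃ H : ℝ → ℝ, Monotone H ∧
      ∀ x ∈ Z, 0 ≤ x → ∀ C : ℝ, ∀ᶠ t in nhdsWithin x (Ioi x),
        C * (t - x) ≤ H t - H x := by
  have hex : ∀ k : ℕ, ∃ U : Set ℝ, Z ⊆ U ∧ IsOpen U ∧ volume U < (2:ℝ≥0∞)⁻¹ ^ k := by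
    intro k
    have h0 : volume Z < (2:ℝ≥0∞)⁻¹ ^ k := by
      rw [hZ]
      exact pos_iff_ne_zero.mpr (pow_ne_zero _ (by simp))
    obtain ⟨U, hZU, hUo, hUv⟩ := Set.exists_isOpen_lt_of_lt Z _ h0
    exact ⟨U, hZU, hUo, hUv⟩
  choose U hZU hUo hUv using hex
  set m : ℝ → ℝ≥0∞ := fun x => ∑' k, volume (U k ∩ Ioc 0 x) with hm
  have hterm : ∀ k (x : ℝ), volume (U k ∩ Ioc 0 x) ≤ (2:ℝ≥0∞)⁻¹ ^ k := fun k x =>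
    le_trans (measure_mono inter_subset_left) (hUv k).le
  have hfin : ∀ x : ℝ, m x ≠ ⊤ := by
    intro x
    have : m x ≤ ∑' k : ℕ, (2:ℝ≥0∞)⁻¹ ^ k := ENNReal.tsum_le_tsum fun k => hterm k x
    rw [ENNReal.tsum_geometric] at this
    exact ne_top_of_le_ne_top (by simp) this
  refine ⟨fun x => (m x).toReal, ?_, ?_⟩
  · intro x y hxy
    exact ENNReal.toReal_mono (hfin y)
      (ENNReal.tsum_le_tsum fun k => measure_mono (inter_subset_inter_right _ (Ioc_subset_Ioc_right hxy)))
  · intro x hxZ hx0 C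
    obtain ⟨N, hN⟩ := exists_nat_ge C
    have hVo : IsOpen (⋂ k ∈ Finset.range N, U k) :=
      isOpen_biInter_finset fun k _ => hUo k
    have hxV : x ∈ ⋂ k ∈ Finset.range N, U k := mem_iInter₂.mpr fun k _ => hZU k hxZ
    obtain ⟨η, hη, hball⟩ := Metric.isOpen_iff.mp hVo x hxV
    filter_upwards [Ioo_mem_nhdsGT (by linarith : x < x + η),
      self_mem_nhdsWithin] with t ht htx
    have htx' : x < t := htx
    have hsub : Ioc x t ⊆ ⋂ k ∈ Finset.range N, U k := by
      intro s hs
      apply hball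
      rw [Metric.mem_ball, Real.dist_eq, abs_lt]
      constructor <;> [linarith [hs.1]; linarith [hs.2, ht.2]]
    -- decompose m t = m x + tail
    have hsplit : ∀ k, volume (U k ∩ Ioc 0 t) =
        volume (U k ∩ Ioc 0 x) + volume (U k ∩ Ioc x t) := by
      intro k
      rw [← measure_union]
      · rw [← inter_union_distrib_left, Ioc_union_Ioc_eq_Ioc hx0 htx'.le]
      · exact (Set.Ioc_disjoint_Ioc_of_le le_rfl).mono inter_subset_right inter_subset_right
      · exact ((hUo k).measurableSet.inter measurableSet_Ioc)
    have hmt : m t = m x + ∑' k, volume (U k ∩ Ioc x t) := by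
      rw [hm]
      simp only [hsplit]
      exact ENNReal.tsum_add
    have htail_fin : (∑' k, volume (U k ∩ Ioc x t)) ≠ ⊤ :=
      fun h => hfin t (by rw [hmt, h]; simp)
    have hdiff : (m t).toReal - (m x).toReal = (∑' k, volume (U k ∩ Ioc x t)).toReal := by
      rw [hmt, ENNReal.toReal_add (hfin x) htail_fin]
      ring
    rw [hdiff]
    -- lower bound the tail
    have hlb : (N : ℝ≥0∞) * ENNReal.ofReal (t - x) ≤ ∑' k, volume (U k ∩ Ioc x t) := by
      have h1 : ∀ k ∈ Finset.range N, volume (U k ∩ Ioc x t) = ENNReal.ofReal (t - x) := by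
        intro k hk
        have : U k ∩ Ioc x t = Ioc x t :=
          inter_eq_self_of_subset_right (hsub.trans (iInter₂_subset k hk))
        rw [this, Real.volume_Ioc]
      calc (N : ℝ≥0∞) * ENNReal.ofReal (t - x)
          = ∑ k ∈ Finset.range N, volume (U k ∩ Ioc x t) := by
            rw [Finset.sum_congr rfl h1]; simp [Finset.sum_const, mul_comm]
        _ ≤ ∑' k, volume (U k ∩ Ioc x t) := ENNReal.sum_le_tsum _
    have := ENNReal.toReal_mono htail_fin hlb
    rw [ENNReal.toReal_mul, ENNReal.toReal_ofReal (by linarith : (0:ℝ) ≤ t - x)] at this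
    simp only [ENNReal.toReal_natCast] at this
    nlinarith

lemma freq_lb {f : ℝ → ℝ} {x : ℝ} (h : DURp f x ≠ ⊥) :
    ∃ M : ℝ, ∃ᶠ t in nhdsWithin x (Ioi x), M * (t - x) < f t - f x := by
  have hlt : (⊥ : EReal) < DURp f x := bot_lt_iff_ne_bot.mpr h
  obtain ⟨M, -, hM⟩ := EReal.lt_iff_exists_real_btwn.mp hlt
  refine ⟨M, ?_⟩
  have hfreq := Filter.frequently_lt_of_lt_limsup (by isBoundedDefault) hM
  have hev : ∀ᶠ t in nhdsWithin x (Ioi x), t ∈ Ioi x := self_mem_nhdsWithin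
  refine (hfreq.and_eventually hev).mono ?_
  rintro t ⟨hq, htx⟩
  have htx' : (0:ℝ) < t - x := sub_pos.mpr htx
  have : M < (f t - f x) / (t - x) := by exact_mod_cast hq
  exact (lt_div_iff₀ htx').mp this

lemma freq_pos {f : ℝ → ℝ} {x : ℝ} (h : DURp f x = ⊤) :
    ∃ᶠ t in nhdsWithin x (Ioi x), 0 < f t - f x := by
  have hM : ((0:ℝ) : EReal) < DURp f x := by rw [h]; exact EReal.coe_lt_top 0
  have hfreq := Filter.frequently_lt_of_lt_limsup (by isBoundedDefault) hM
  have hev : ∀ᶠ t in nhdsWithin x (Ioi x), t ∈ Ioi x := self_mem_nhdsWithin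
  refine (hfreq.and_eventually hev).mono ?_
  rintro t ⟨hq, htx⟩
  have htx' : (0:ℝ) < t - x := sub_pos.mpr htx
  have : (0:ℝ) < (f t - f x) / (t - x) := by exact_mod_cast hq
  have := (div_pos_iff.mp this)
  rcases this with ⟨h1, _⟩ | ⟨_, h2⟩
  · exact h1
  · linarith

lemma dlrp_ne_bot_of_mono {f : ℝ → ℝ} {a b x : ℝ}
    (hmono : ∀ u ∈ Icc a b, ∀ v ∈ Icc a b, u ≤ v → f u ≤ f v)
    (hx : x ∈ Ico a b) : DLRp f x ≠ ⊥ := by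
  have hev : ∀ᶠ t in nhdsWithin x (Ioi x),
      ((0:ℝ) : EReal) ≤ (((f t - f x) / (t - x) : ℝ) : EReal) := by
    filter_upwards [Ioo_mem_nhdsGT hx.2, self_mem_nhdsWithin] with t htIoo htx
    have h1 : f x ≤ f t :=
      hmono x ⟨hx.1, hx.2.le⟩ t ⟨hx.1.trans (le_of_lt htIoo.1), htIoo.2.le⟩ (le_of_lt htx)
    have h2 : (0:ℝ) ≤ (f t - f x) / (t - x) :=
      div_nonneg (by linarith) (by simp at htx; linarith)
    exact_mod_cast h2
  have := Filter.le_liminf_of_le (by isBoundedDefault) hev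
  intro hbot
  rw [DLRp] at hbot
  rw [hbot, le_bot_iff] at this
  exact EReal.coe_ne_bot 0 this

lemma key_lemma (f : ℝ → ℝ) (hcont : ContinuousOn f (Icc (0 : ℝ) 1))
    (hknot : ∀ᵐ x ∂(volume.restrict (Icc (0 : ℝ) 1)), IsKnotPoint f x) :
    ∀ a b : ℝ, 0 ≤ a → a < b → b ≤ 1 → ∃ x₀ ∈ Icc a b, DURp f x₀ = ⊥ := by
  intro a b ha hab hb
  set Z : Set ℝ := {x | ¬ IsKnotPoint f x} ∩ Icc 0 1 with hZdef
  have hZ0 : volume Z = 0 := by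
    have := ae_iff.mp hknot
    rwa [Measure.restrict_apply' measurableSet_Icc] at this
  by_contra hcon
  push_neg at hcon
  obtain ⟨H, hHmono, hHgrow⟩ := exists_growth Z hZ0
  -- f is nondecreasing on [a,b]
  have hmono : ∀ u ∈ Icc a b, ∀ v ∈ Icc a b, u ≤ v → f u ≤ f v := by
    intro u hu v hv huv
    have hsub : Icc u v ⊆ Icc (0:ℝ) 1 := Icc_subset_Icc (by linarith [hu.1]) (by linarith [hv.2])
    have hclaim : ∀ ε : ℝ, 0 < ε → f u ≤ f v + ε * (H v - H u + (v - u)) := by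
      intro ε hε
      have hstep : ∀ x ∈ Ico u v, ∃ t ∈ Ioc x v,
          f x + ε * H x - ε * (t - x) ≤ f t + ε * H t := by
        intro x hx
        have hx01 : x ∈ Icc (0:ℝ) 1 := ⟨by linarith [hu.1, hx.1], by linarith [hx.2, hv.2]⟩
        have hxab : x ∈ Icc a b := ⟨by linarith [hu.1, hx.1], by linarith [hx.2, hv.2]⟩
        have hev : Ioo x v ∈ nhdsWithin x (Ioi x) := Ioo_mem_nhdsGT hx.2
        by_cases hk : IsKnotPoint f x
        · obtain ⟨t, hq, ht⟩ := ((freq_pos hk.1).and_eventually hev).exists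
          refine ⟨t, ⟨ht.1, ht.2.le⟩, ?_⟩
          have h1 : ε * H x ≤ ε * H t := mul_le_mul_of_nonneg_left (hHmono ht.1.le) hε.le
          nlinarith [ht.1]
        · have hxZ : x ∈ Z := ⟨hk, hx01⟩
          obtain ⟨M, hfreq⟩ := freq_lb (hcon x hxab)
          have hgrow := hHgrow x hxZ hx01.1 (-M/ε)
          obtain ⟨t, hq, hg, ht⟩ := (hfreq.and_eventually (hgrow.and hev)).exists
          refine ⟨t, ⟨ht.1, ht.2.le⟩, ?_⟩
          have htx : (0:ℝ) < t - x := by linarith [ht.1]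
          have h1 : ε * ((-M/ε) * (t - x)) ≤ ε * (H t - H x) :=
            mul_le_mul_of_nonneg_left hg hε.le
          have h2 : ε * ((-M/ε) * (t - x)) = -M * (t - x) := by
            field_simp
          nlinarith
      have := chain_lemma (hcont.mono hsub) hHmono hε.le hε huv hstep
      linarith
    by_contra hlt
    push_neg at hlt
    set K := H v - H u + (v - u) with hK
    have hK0 : 0 ≤ K := by
      have := hHmono huv
      simp only [hK]; linarith
    have hε : 0 < (f u - f v) / (K + 1) := div_pos (by linarith) (by linarith)
    have := hclaim _ hε
    rw [div_mul_eq_mul_div] at this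
    have h2 : (f u - f v) * K / (K + 1) < f u - f v := by
      rw [div_lt_iff₀ (by linarith)]
      nlinarith
    linarith
  -- find a knot point in (a,b)
  have hIoo : ¬ (Ioo a b ⊆ Z) := by
    intro hsub
    have h1 : volume (Ioo a b) ≤ volume Z := measure_mono hsub
    rw [hZ0, Real.volume_Ioo] at h1
    simp only [nonpos_iff_eq_zero, ENNReal.ofReal_eq_zero] at h1
    linarith
  obtain ⟨x₀, hx₀Ioo, hx₀Z⟩ := not_subset.mp hIoo
  have hx₀01 : x₀ ∈ Icc (0:ℝ) 1 := ⟨by linarith [hx₀Ioo.1], by linarith [hx₀Ioo.2]⟩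
  have hknot₀ : IsKnotPoint f x₀ := by
    by_contra hk
    exact hx₀Z ⟨hk, hx₀01⟩
  exact dlrp_ne_bot_of_mono hmono ⟨hx₀Ioo.1.le, hx₀Ioo.2⟩ hknot₀.2.2.1

/-- A continuous map of `[0,1]` with a knot point at Lebesgue-almost every point is not
a Besicovitch function; in fact, every subinterval contains a point where
`D⁺f(x₀) = -∞`. -/
theorem stmt_14 (f : ℝ → ℝ) (hcont : ContinuousOn f (Icc (0 : ℝ) 1))
    (hmaps : MapsTo f (Icc (0 : ℝ) 1) (Icc (0 : ℝ) 1))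
    (hknot : ∀ᵐ x ∂(volume.restrict (Icc (0 : ℝ) 1)), IsKnotPoint f x) :
    ¬ IsBesicovitch f ∧
      ∀ a b : ℝ, 0 ≤ a → a < b → b ≤ 1 → ∃ x₀ ∈ Icc a b, DURp f x₀ = ⊥ := by
  have key := key_lemma f hcont hknot
  refine ⟨?_, key⟩
  intro hB
  obtain ⟨x₀, hx₀, hbot⟩ := key 0 1 le_rfl one_pos le_rfl
  have h1 : DLRp f x₀ ≤ DURp f x₀ := by
    rw [DLRp, DURp]; exact Filter.liminf_le_limsup
  rw [hbot, le_bot_iff] at h1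
  exact (hB x₀ hx₀).1 (hbot.trans h1.symm)
end

section
/- For every odd positive integer m, the m-fold window perturbation of a continuous Lebesgue measure-preserving interval map is again a continuous Lebesgue measure-preserving map, and it agrees with the original map outside the perturbation window. -/
open MeasureTheory Set

lemma aux_vol_affine (k d : ℝ) (hk : k ≠ 0) (T : Set ℝ) :
    volume ((fun x => k * x + d) ⁻¹' T) = ENNReal.ofReal |k⁻¹| * volume T := by
  have e : (fun x : ℝ => k * x + d) = (fun y : ℝ => y + d) ∘ (fun x => k * x) := rfl
  rw [e, Set.preimage_comp, Real.volume_preimage_mul_left hk,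
    measure_preimage_add_right volume d T]

lemma aux_biUnion_Icc (c : ℕ → ℝ) (hmono : Monotone c) : ∀ n, 1 ≤ n →
    (⋃ i ∈ Finset.range n, Icc (c i) (c (i+1))) = Icc (c 0) (c n) := by
  intro n hn
  induction n with
  | zero => omega
  | succ k ih =>
    rcases Nat.eq_zero_or_pos k with h | hk
    · subst h; simp
    · rw [Finset.range_add_one]
      simp only [Finset.set_biUnion_insert]
      rw [ih hk, Set.union_comm,
        Set.Icc_union_Icc_eq_Icc (hmono (Nat.zero_le k)) (hmono (Nat.le_succ k))]

lemma aux_biUnion_Ioc (c : ℕ → ℝ) (hmono : Monotone c) : ∀ n,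
    (⋃ i ∈ Finset.range n, Ioc (c i) (c (i+1))) = Ioc (c 0) (c n) := by
  intro n
  induction n with
  | zero => simp
  | succ k ih =>
    rw [Finset.range_add_one]
    simp only [Finset.set_biUnion_insert]
    rw [ih, Set.union_comm,
      Set.Ioc_union_Ioc_eq_Ioc (hmono (Nat.zero_le k)) (hmono (Nat.le_succ k))]

/-- For every odd `m`, the `m`-fold window perturbation of a continuous Lebesgue
measure-preserving interval map (rescaled copies of `f|_J` on the `m` equal pieces of
the window `J = [a,b]`, every second copy reversed) is again continuous and Lebesgue
measure-preserving, and it agrees with `f` outside the window. -/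
theorem stmt_17 (f h : ℝ → ℝ) (hc : Continuous f)
    (hmaps : MapsTo f (Icc (0 : ℝ) 1) (Icc (0 : ℝ) 1))
    (hmp : MeasurePreserving f (volume.restrict (Icc (0 : ℝ) 1))
      (volume.restrict (Icc (0 : ℝ) 1)))
    (m : ℕ) (hm : Odd m) (hm1 : 1 ≤ m)
    (a b : ℝ) (ha : 0 ≤ a) (hab : a < b) (hb : b ≤ 1)
    (hout : ∀ x, x ∉ Icc a b → h x = f x)
    (hodd : ∀ i : ℕ, 1 ≤ i → i ≤ m → Odd i →
      ∀ x ∈ Icc (a + (i - 1 : ℝ) * (b - a) / m) (a + (i : ℝ) * (b - a) / m),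
        h x = f (a + m * (x - a - (i - 1 : ℝ) * (b - a) / m)))
    (heven : ∀ i : ℕ, 1 ≤ i → i ≤ m → Even i →
      ∀ x ∈ Icc (a + (i - 1 : ℝ) * (b - a) / m) (a + (i : ℝ) * (b - a) / m),
        h x = f (a + m * (a + (i : ℝ) * (b - a) / m - x))) :
    Continuous h ∧
      MeasurePreserving h (volume.restrict (Icc (0 : ℝ) 1))
        (volume.restrict (Icc (0 : ℝ) 1)) ∧
      ∀ x, x ∉ Icc a b → h x = f x := by
  have hmR : (m : ℝ) ≠ 0 := Nat.cast_ne_zero.2 (by omega)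
  have hmpos : (0 : ℝ) < m := by positivity
  have hba : (0 : ℝ) < b - a := by linarith
  set c : ℕ → ℝ := fun i => a + i * (b - a) / m with hc_def
  have hc0 : c 0 = a := by simp [hc_def]
  have hcm : c m = b := by simp only [hc_def]; field_simp; ring
  have hstep : ∀ i : ℕ, c (i + 1) = c i + (b - a) / m := by
    intro i; simp only [hc_def]; (try push_cast); (try ring)
  have hlt : ∀ i : ℕ, c i < c (i + 1) := by
    intro i; rw [hstep i]; have : 0 < (b - a) / m := by positivity
    linarith
  have hmono : Monotone c := monotone_nat_of_le_succ fun i => (hlt i).le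
  have hci1 : ∀ i : ℕ, (m : ℝ) * c (i + 1) = m * c i + (b - a) := by
    intro i; rw [hstep i]; field_simp
  -- rescaled formulas on the pieces
  have hpodd : ∀ i : ℕ, i < m → Odd (i + 1) → ∀ x ∈ Icc (c i) (c (i + 1)),
      h x = f ((m : ℝ) * x + (a - m * c i)) := by
    intro i hi hpar x hx
    have e1 : a + (((i + 1 : ℕ) : ℝ) - 1) * (b - a) / m = c i := by
      simp only [hc_def]; (try push_cast); (try ring)
    have e2 : a + ((i + 1 : ℕ) : ℝ) * (b - a) / m = c (i + 1) := by
      simp only [hc_def]; (try push_cast); (try ring)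
    have := hodd (i + 1) (by omega) (by omega) hpar x (by rw [e1, e2]; exact hx)
    rw [this]
    have e3 : a + (m : ℝ) * (x - a - (((i + 1 : ℕ) : ℝ) - 1) * (b - a) / m)
        = (m : ℝ) * x + (a - m * c i) := by
      simp only [hc_def]; (try push_cast); (try field_simp); (try ring)
    rw [e3]
  have hpeven : ∀ i : ℕ, i < m → Even (i + 1) → ∀ x ∈ Icc (c i) (c (i + 1)),
      h x = f (-(m : ℝ) * x + (a + m * c (i + 1))) := by
    intro i hi hpar x hx
    have e1 : a + (((i + 1 : ℕ) : ℝ) - 1) * (b - a) / m = c i := by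
      simp only [hc_def]; (try push_cast); (try ring)
    have e2 : a + ((i + 1 : ℕ) : ℝ) * (b - a) / m = c (i + 1) := by
      simp only [hc_def]; (try push_cast); (try ring)
    have := heven (i + 1) (by omega) (by omega) hpar x (by rw [e1, e2]; exact hx)
    rw [this]
    have e3 : a + (m : ℝ) * (a + ((i + 1 : ℕ) : ℝ) * (b - a) / m - x)
        = -(m : ℝ) * x + (a + m * c (i + 1)) := by
      simp only [hc_def]; (try push_cast); (try ring)
    rw [e3]
  -- h = f on (-∞, a]
  have heqIic : EqOn h f (Iic a) := by
    intro x hx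
    rcases lt_or_eq_of_le (mem_Iic.mp hx) with hlt' | heq'
    · exact hout x fun hmem => absurd hmem.1 (not_le.2 hlt')
    · subst heq'
      have hmem : x ∈ Icc (c 0) (c 1) := ⟨hc0.le, by rw [← hc0]; exact (hlt 0).le⟩
      rw [hpodd 0 (by omega) odd_one x hmem]
      congr 1
      rw [hc0]; ring
  -- h = f on [b, ∞)
  have heqIci : EqOn h f (Ici b) := by
    intro x hx
    rcases lt_or_eq_of_le (mem_Ici.mp hx) with hlt' | heq'
    · exact hout x fun hmem => absurd hmem.2 (not_le.2 hlt')
    · subst heq'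
      have hm' : m - 1 + 1 = m := Nat.succ_pred_eq_of_pos hm1
      have hmem : b ∈ Icc (c (m - 1)) (c (m - 1 + 1)) := by
        rw [hm', hcm]
        exact ⟨hcm ▸ hmono (by omega : m - 1 ≤ m), le_refl b⟩
      have := hpodd (m - 1) (by omega) (by rw [hm']; exact hm) b hmem
      rw [this]
      congr 1
      have hcm1 : c (m - 1) = b - (b - a) / m := by
        have := hstep (m - 1); rw [hm', hcm] at this; linarith
      rw [hcm1]; field_simp; ring
  -- continuity via a finite closed cover
  have hcont : Continuous h := by
    apply LocallyFinite.continuous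
      (f := fun n : ℕ => if n = 0 then Iic a else if n ≤ m then Icc (c (n - 1)) (c n)
        else if n = m + 1 then Ici b else (∅ : Set ℝ))
    · intro x
      refine ⟨univ, Filter.univ_mem, Set.Finite.subset (Set.finite_Iic (m + 1)) ?_⟩
      intro n hn
      simp only [mem_setOf_eq] at hn
      by_contra hgt
      simp only [mem_Iic, not_le] at hgt
      have hemp : (if n = 0 then Iic a else if n ≤ m then Icc (c (n - 1)) (c n)
          else if n = m + 1 then Ici b else (∅ : Set ℝ)) = ∅ := by
        rw [if_neg (by omega), if_neg (by omega), if_neg (by omega)]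
      rw [hemp] at hn
      simp at hn
    · ext x
      simp only [mem_iUnion, mem_univ, iff_true]
      rcases le_or_gt x a with h1 | h1
      · exact ⟨0, by simp [h1]⟩
      rcases le_or_gt b x with h2 | h2
      · refine ⟨m + 1, ?_⟩
        rw [if_neg (by omega), if_neg (by omega), if_pos rfl]
        exact h2
      · have hxmem : x ∈ ⋃ i ∈ Finset.range m, Icc (c i) (c (i + 1)) := by
          rw [aux_biUnion_Icc c hmono m hm1, hc0, hcm]
          exact ⟨h1.le, h2.le⟩
        simp only [mem_iUnion, Finset.mem_range] at hxmem
        obtain ⟨i, hi, hx⟩ := hxmem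
        refine ⟨i + 1, ?_⟩
        rw [if_neg (by omega), if_pos (by omega)]
        simpa using hx
    · intro n
      split_ifs
      exacts [isClosed_Iic, isClosed_Icc, isClosed_Ici, isClosed_empty]
    · intro n
      split_ifs with h0 hle hM
      · exact hc.continuousOn.congr heqIic
      · -- piece n, 1 ≤ n ≤ m
        have hn1 : n - 1 < m := by omega
        have hn' : n - 1 + 1 = n := by omega
        rcases Nat.even_or_odd n with hpar | hpar
        · have hcg : Continuous fun x : ℝ => f (-(m : ℝ) * x + (a + m * c (n - 1 + 1))) :=
            hc.comp ((continuous_const.mul continuous_id).add continuous_const)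
          refine hcg.continuousOn.congr ?_
          intro x hx
          have hx' : x ∈ Icc (c (n - 1)) (c (n - 1 + 1)) := by rw [hn']; exact hx
          exact hpeven (n - 1) hn1 (by rw [hn']; exact hpar) x hx'
        · have hcg : Continuous fun x : ℝ => f ((m : ℝ) * x + (a - m * c (n - 1))) :=
            hc.comp ((continuous_const.mul continuous_id).add continuous_const)
          refine hcg.continuousOn.congr ?_
          intro x hx
          have hx' : x ∈ Icc (c (n - 1)) (c (n - 1 + 1)) := by rw [hn']; exact hx
          exact hpodd (n - 1) hn1 (by rw [hn']; exact hpar) x hx'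
      · exact hc.continuousOn.congr heqIci
      · exact continuousOn_empty h
  have hmeas : Measurable h := hcont.measurable
  refine ⟨hcont, ⟨hmeas, ?_⟩, hout⟩
  ext A hA
  rw [Measure.map_apply hmeas hA, Measure.restrict_apply (hmeas hA),
    Measure.restrict_apply hA]
  have hfA : volume (f ⁻¹' A ∩ Icc 0 1) = volume (A ∩ Icc 0 1) := by
    have h1 := hmp.measure_preimage hA.nullMeasurableSet
    rwa [Measure.restrict_apply (hc.measurable hA), Measure.restrict_apply hA] at h1
  rw [← hfA]
  have hsub : Icc a b ⊆ Icc (0 : ℝ) 1 := Icc_subset_Icc ha hb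
  have split : ∀ u : ℝ → ℝ, Measurable u →
      volume (u ⁻¹' A ∩ Icc 0 1)
        = volume (u ⁻¹' A ∩ (Icc 0 1 \ Icc a b)) + volume (u ⁻¹' A ∩ Icc a b) := by
    intro u hu
    rw [← measure_union ?dis ((hu hA).inter measurableSet_Icc)]
    · congr 1
      rw [← Set.inter_union_distrib_left, Set.diff_union_self,
        Set.union_eq_self_of_subset_right hsub]
    case dis =>
      exact disjoint_sdiff_self_left.mono inf_le_right inf_le_right
  rw [split h hmeas, split f hc.measurable]
  have houtside : h ⁻¹' A ∩ (Icc 0 1 \ Icc a b) = f ⁻¹' A ∩ (Icc 0 1 \ Icc a b) := by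
    ext x
    simp only [mem_inter_iff, mem_preimage, mem_diff]
    constructor
    · rintro ⟨hx1, hx2⟩; exact ⟨by rwa [← hout x hx2.2], hx2⟩
    · rintro ⟨hx1, hx2⟩; exact ⟨by rwa [hout x hx2.2], hx2⟩
  rw [houtside]
  congr 1
  -- window part
  have haeIoc : volume (h ⁻¹' A ∩ Icc a b) = volume (h ⁻¹' A ∩ Ioc a b) :=
    (measure_congr (Filter.EventuallyEq.rfl.inter Ioc_ae_eq_Icc)).symm
  rw [haeIoc]
  have hcover : Ioc a b = ⋃ i ∈ Finset.range m, Ioc (c i) (c (i + 1)) := by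
    rw [aux_biUnion_Ioc c hmono m, hc0, hcm]
  rw [hcover]
  rw [Set.inter_iUnion₂]
  have hdisjIoc : ∀ p q : ℕ, p < q →
      Disjoint (Ioc (c p) (c (p + 1))) (Ioc (c q) (c (q + 1))) := by
    intro p q hpq
    rw [Set.disjoint_left]
    intro x hx1 hx2
    have : c (p + 1) ≤ c q := hmono hpq
    linarith [hx1.2, hx2.1]
  have hpair : (↑(Finset.range m) : Set ℕ).PairwiseDisjoint
      (fun i => h ⁻¹' A ∩ Ioc (c i) (c (i + 1))) := by
    intro p _ q _ hpq
    have base : Disjoint (Ioc (c p) (c (p + 1))) (Ioc (c q) (c (q + 1))) := by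
      rcases hpq.lt_or_gt with hlt' | hlt'
      · exact hdisjIoc p q hlt'
      · exact (hdisjIoc q p hlt').symm
    exact base.mono inf_le_right inf_le_right
  rw [measure_biUnion_finset hpair
    (fun i _ => (hmeas hA).inter measurableSet_Ioc)]
  have hterm : ∀ i ∈ Finset.range m,
      volume (h ⁻¹' A ∩ Ioc (c i) (c (i + 1)))
        = ENNReal.ofReal ((m : ℝ)⁻¹) * volume (f ⁻¹' A ∩ Icc a b) := by
    intro i hi
    rw [Finset.mem_range] at hi
    rcases Nat.even_or_odd (i + 1) with hpar | hpar
    · -- even piece, reversed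
      have hset : h ⁻¹' A ∩ Ioc (c i) (c (i + 1))
          = (fun x => -(m : ℝ) * x + (a + m * c (i + 1))) ⁻¹' (f ⁻¹' A ∩ Ico a b) := by
        ext x
        simp only [mem_inter_iff, mem_preimage, mem_Ioc, mem_Ico]
        have hiff : (c i < x ∧ x ≤ c (i + 1)) ↔
            (a ≤ -(m : ℝ) * x + (a + m * c (i + 1)) ∧
              -(m : ℝ) * x + (a + m * c (i + 1)) < b) := by
          constructor
          · rintro ⟨h1, h2⟩
            constructor
            · nlinarith [hci1 i]
            · nlinarith [hci1 i]
          · rintro ⟨h1, h2⟩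
            constructor
            · nlinarith [hci1 i]
            · nlinarith [hci1 i]
        constructor
        · rintro ⟨hxA, hxI⟩
          have hx' : x ∈ Icc (c i) (c (i + 1)) := ⟨hxI.1.le, hxI.2⟩
          rw [hpeven i hi hpar x hx'] at hxA
          exact ⟨hxA, hiff.1 hxI⟩
        · rintro ⟨hxA, hxb⟩
          have hxI := hiff.2 hxb
          refine ⟨?_, hxI⟩
          rw [hpeven i hi hpar x ⟨hxI.1.le, hxI.2⟩]
          exact hxA
      rw [hset, aux_vol_affine _ _ (by simpa using hmR) _]
      have habs : |(-(m : ℝ))⁻¹| = (m : ℝ)⁻¹ := by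
        rw [abs_inv, abs_neg, abs_of_pos hmpos]
      rw [habs]
      congr 1
      exact measure_congr (Filter.EventuallyEq.rfl.inter Ico_ae_eq_Icc)
    · -- odd piece
      have hset : h ⁻¹' A ∩ Ioc (c i) (c (i + 1))
          = (fun x => (m : ℝ) * x + (a - m * c i)) ⁻¹' (f ⁻¹' A ∩ Ioc a b) := by
        ext x
        simp only [mem_inter_iff, mem_preimage, mem_Ioc]
        have hiff : (c i < x ∧ x ≤ c (i + 1)) ↔
            (a < (m : ℝ) * x + (a - m * c i) ∧ (m : ℝ) * x + (a - m * c i) ≤ b) := by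
          constructor
          · rintro ⟨h1, h2⟩
            constructor
            · nlinarith [hci1 i]
            · nlinarith [hci1 i]
          · rintro ⟨h1, h2⟩
            constructor
            · nlinarith [hci1 i]
            · nlinarith [hci1 i]
        constructor
        · rintro ⟨hxA, hxI⟩
          have hx' : x ∈ Icc (c i) (c (i + 1)) := ⟨hxI.1.le, hxI.2⟩
          rw [hpodd i hi hpar x hx'] at hxA
          exact ⟨hxA, hiff.1 hxI⟩
        · rintro ⟨hxA, hxb⟩
          have hxI := hiff.2 hxb
          refine ⟨?_, hxI⟩
          rw [hpodd i hi hpar x ⟨hxI.1.le, hxI.2⟩]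
          exact hxA
      rw [hset, aux_vol_affine _ _ hmR _]
      rw [abs_of_pos (by positivity : (0:ℝ) < (m:ℝ)⁻¹)]
      congr 1
      exact measure_congr (Filter.EventuallyEq.rfl.inter Ioc_ae_eq_Icc)
  rw [Finset.sum_congr rfl hterm, Finset.sum_const, Finset.card_range, nsmul_eq_mul,
    ← mul_assoc]
  have hone : (m : ENNReal) * ENNReal.ofReal ((m : ℝ)⁻¹) = 1 := by
    rw [← ENNReal.ofReal_natCast, ← ENNReal.ofReal_mul (by positivity)]
    rw [mul_inv_cancel₀ hmR, ENNReal.ofReal_one]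
  rw [hone, one_mul]
end
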